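/- Let G be a DAG over latent nodes X*_1,...,X*_d and observed nodes X_1,...,X_d where each X_j has exactly one parent X*_j and no children. If X*_s is a sink node in the induced latent subgraph (no children among X*), then the mutilated graph obtained by removing all edges into X*_s and the mutilated graph obtained by removing the edge X*_s → X_s imply the same d-separation constraints over the observed variables X_1,...,X_d. -/

import Mathlib

/-- A collider pattern `a → b ← c` in the digraph `G`. -/
def Collider {V : Type*} (G : V → V → Prop) (a b c : V) : Prop := G a b ∧ G c b

/-- The list of consecutive triples of a list. -/
def triples {α : Type*} : List α → List (α × α × α)
  | a :: b :: c :: rest => (a, b, c) :: triples (b :: c :: rest)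
  | _ => []

/-- A trail (undirected walk) in the digraph `G`. -/
def IsTrail {V : Type*} (G : V → V → Prop) (p : List V) : Prop :=
  List.Chain' (fun x y => G x y ∨ G y x) p

/-- The middle vertex of a consecutive triple blocks the trail given the
conditioning set `Z`: either it is a collider with no descendant in `Z`, or a
non-collider lying in `Z`. -/
def BlockedAt {V : Type*} (G : V → V → Prop) (Z : Set V) (t : V × V × V) : Prop :=
  (Collider G t.1 t.2.1 t.2.2 ∧ ∀ w, Relation.ReflTransGen G t.2.1 w → w ∉ Z) ∨
  (¬ Collider G t.1 t.2.1 t.2.2 ∧ t.2.1 ∈ Z)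

/-- A trail is blocked by `Z` if some interior vertex blocks it. -/
def Blocked {V : Type*} (G : V → V → Prop) (Z : Set V) (p : List V) : Prop :=
  ∃ t ∈ triples p, BlockedAt G Z t

/-- An active (unblocked) trail from `a` to `b` given `Z`. -/
def ActiveTrail {V : Type*} (G : V → V → Prop) (Z : Set V) (a b : V) (p : List V) : Prop :=
  IsTrail G p ∧ p.head? = some a ∧ p.getLast? = some b ∧ 2 ≤ p.length ∧ ¬ Blocked G Z p

/-- `A` and `B` are d-separated by `Z` in `G`. -/
def DSep {V : Type*} (G : V → V → Prop) (A B Z : Set V) : Prop :=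
  ∀ a ∈ A, ∀ b ∈ B, ¬ ∃ p : List V, ActiveTrail G Z a b p

/-- Two DAGs are observationally equivalent with respect to the observed vertex set `O`
if they imply exactly the same conditional independence (d-separation) constraints
over disjoint subsets of `O`. -/
def ObsEquiv {V : Type*} (G G' : V → V → Prop) (O : Set V) : Prop :=
  ∀ A B Z : Set V, A ⊆ O → B ⊆ O → Z ⊆ O →
    Disjoint A B → Disjoint A Z → Disjoint B Z →
    (DSep G A B Z ↔ DSep G' A B Z)

/-!
Write `l = X*ₛ` and `o = Xₛ`. In neither mutilation does an active trail between two distinct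
observed vertices pass through `l`: after the mechanistic intervention `{l, o}` is a connected
component containing a single observed vertex, and after the measurement intervention `l` has no
children, so as an interior vertex it is a collider whose only descendant, `l` itself, is not
conditioned on. Away from `l` the two graphs have the same edges, and the descendants of a vertex
other than `l` agree up to `l`, so the same trails avoiding `l` are active in both.
-/

section List

variable {α : Type*}

theorem mem_triples_iff {x y z : α} : ∀ {p : List α}, (x, y, z) ∈ triples p ↔ [x, y, z] <:+: p
  | a :: b :: c :: rest => by
    rw [triples, List.mem_cons, mem_triples_iff, List.infix_cons_iff (a := a)]
    simp
  | [] | [_] | [_, _] => by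
    simp only [triples, List.not_mem_nil, false_iff]
    exact fun h => by simpa using h.length_le

theorem exists_mem_triples_of_mem {p : List α} {y : α} (hy : y ∈ p)
    (hhead : p.head? ≠ some y) (hlast : p.getLast? ≠ some y) :
    ∃ x z, (x, y, z) ∈ triples p := by
  obtain ⟨s, t, rfl⟩ := List.append_of_mem hy
  obtain rfl | ⟨s, x, rfl⟩ := s.eq_nil_or_concat
  · simp at hhead
  obtain _ | ⟨z, t⟩ := t
  · simp at hlast
  exact ⟨x, z, mem_triples_iff.2 ⟨s, t, by simp⟩⟩

theorem List.IsChain.pred_iff_of_mem {R : α → α → Prop} {P : α → Prop} {p : List α}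
    (hp : p.IsChain R) (hR : ∀ x y, R x y → (P x ↔ P y)) {x y : α} (hx : x ∈ p) (hy : y ∈ p) :
    P x ↔ P y := by
  have hhead : ∀ z ∈ p, ∀ hne : p ≠ [], P z ↔ P (p.head hne) := fun z hz hne =>
    hp.induction (fun z => P z ↔ P (p.head hne)) p (fun u v huv hu => (hR u v huv).symm.trans hu)
      (fun _ => Iff.rfl) z hz
  have hne := List.ne_nil_of_mem hx
  exact (hhead x hx hne).trans (hhead y hy hne).symm

end List

open Relation

section DSeparation

variable {V : Type*} {G G' : V → V → Prop} {Z S : Set V}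

theorem blockedAt_congr (hadj : ∀ x ∈ S, ∀ y ∈ S, G x y ↔ G' x y)
    (hdesc : ∀ m ∈ S,
      (∀ w, ReflTransGen G m w → w ∉ Z) ↔ (∀ w, ReflTransGen G' m w → w ∉ Z))
    {u m w : V} (hu : u ∈ S) (hm : m ∈ S) (hw : w ∈ S) :
    BlockedAt G Z (u, m, w) ↔ BlockedAt G' Z (u, m, w) := by
  simp only [BlockedAt, Collider, hadj u hu m hm, hadj w hw m hm, hdesc m hm]

theorem activeTrail_congr (hadj : ∀ x ∈ S, ∀ y ∈ S, G x y ↔ G' x y)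
    (hdesc : ∀ m ∈ S,
      (∀ w, ReflTransGen G m w → w ∉ Z) ↔ (∀ w, ReflTransGen G' m w → w ∉ Z))
    {a b : V} {p : List V} (hp : ∀ x ∈ p, x ∈ S) :
    ActiveTrail G Z a b p ↔ ActiveTrail G' Z a b p := by
  have htrail : IsTrail G p ↔ IsTrail G' p :=
    List.IsChain.iff_of_mem_imp fun x y hx hy =>
      or_congr (hadj x (hp x hx) y (hp y hy)) (hadj y (hp y hy) x (hp x hx))
  have hblocked : Blocked G Z p ↔ Blocked G' Z p := by
    refine exists_congr fun ⟨u, m, w⟩ => and_congr_right fun ht => ?_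
    have hsub := (mem_triples_iff.1 ht).subset
    exact blockedAt_congr hadj hdesc (hp u (hsub (by simp))) (hp m (hsub (by simp)))
      (hp w (hsub (by simp)))
  simp only [ActiveTrail, htrail, hblocked]

end DSeparation

section Mutilation

variable {V : Type*} {G : V → V → Prop} {l o m w a b : V} {Z : Set V} {p : List V}

def removeEdgesInto (G : V → V → Prop) (l : V) : V → V → Prop := fun v u => G v u ∧ u ≠ l

def removeEdge (G : V → V → Prop) (l o : V) : V → V → Prop := fun v u => G v u ∧ ¬(v = l ∧ u = o)

theorem removeEdgesInto_iff_removeEdge {x y : V} (hx : x ≠ l) (hy : y ≠ l) :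
    removeEdgesInto G l x y ↔ removeEdge G l o x y :=
  and_congr_right fun _ => ⟨fun _ h => hx h.1, fun _ => hy⟩

theorem not_removeEdge_left (hl : ∀ u, G l u → u = o) (u : V) : ¬removeEdge G l o l u :=
  fun h => h.2 ⟨rfl, hl u h.1⟩

theorem reflTransGen_removeEdge_of_removeEdgesInto (hm : m ≠ l)
    (h : ReflTransGen (removeEdgesInto G l) m w) : ReflTransGen (removeEdge G l o) m w := by
  induction h using ReflTransGen.head_induction_on with
  | refl => exact .refl
  | head e _ ih => exact .head ((removeEdgesInto_iff_removeEdge hm e.2).1 e) (ih e.2)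

theorem eq_or_reflTransGen_removeEdgesInto_of_removeEdge (hl : ∀ u, G l u → u = o)
    (h : ReflTransGen (removeEdge G l o) m w) : w = l ∨ ReflTransGen (removeEdgesInto G l) m w := by
  induction h with
  | refl => exact .inr .refl
  | @tail v u _ e ih =>
    obtain rfl | hmv := ih
    · exact absurd e (not_removeEdge_left hl u)
    · by_cases hu : u = l
      · exact .inl hu
      · exact .inr (hmv.tail ⟨e.1, hu⟩)

theorem forall_reflTransGen_not_mem_removeEdgesInto_iff (hl : ∀ u, G l u → u = o) (hlZ : l ∉ Z)
    (hm : m ≠ l) :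
    (∀ w, ReflTransGen (removeEdgesInto G l) m w → w ∉ Z) ↔
      (∀ w, ReflTransGen (removeEdge G l o) m w → w ∉ Z) := by
  refine ⟨fun h w hw => ?_, fun h w hw => h w (reflTransGen_removeEdge_of_removeEdgesInto hm hw)⟩
  obtain rfl | hw := eq_or_reflTransGen_removeEdgesInto_of_removeEdge hl hw
  exacts [hlZ, h w hw]

theorem activeTrail_removeEdgesInto_iff_removeEdge (hl : ∀ u, G l u → u = o) (hlZ : l ∉ Z)
    (hlp : l ∉ p) :
    ActiveTrail (removeEdgesInto G l) Z a b p ↔ ActiveTrail (removeEdge G l o) Z a b p :=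
  activeTrail_congr (S := {l}ᶜ) (fun _ hx _ hy => removeEdgesInto_iff_removeEdge hx hy)
    (fun _ hm => forall_reflTransGen_not_mem_removeEdgesInto_iff hl hlZ hm)
    (fun _ hx hxl => hlp (hxl ▸ hx))

theorem not_mem_of_activeTrail_removeEdge (hl : ∀ u, G l u → u = o) (hlZ : l ∉ Z)
    (ha : a ≠ l) (hb : b ≠ l) (hp : ActiveTrail (removeEdge G l o) Z a b p) : l ∉ p := by
  obtain ⟨htrail, hhead, hlast, -, hunblocked⟩ := hp
  intro hlp
  obtain ⟨u, w, ht⟩ := exists_mem_triples_of_mem hlp (by simp [hhead, ha]) (by simp [hlast, hb])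
  have hcollider : removeEdge G l o u l ∧ removeEdge G l o w l := by
    have := (htrail : p.IsChain _).infix (mem_triples_iff.1 ht)
    simpa [List.isChain_cons_cons, not_removeEdge_left hl] using this
  refine hunblocked ⟨_, ht, .inl ⟨hcollider, fun v hv => ?_⟩⟩
  obtain rfl | ⟨c, hc, -⟩ := hv.cases_head
  exacts [hlZ, (not_removeEdge_left hl c hc).elim]

theorem not_mem_of_activeTrail_removeEdgesInto {O : Set V} (hl : ∀ u, G l u → u = o)
    (ho : ∀ v, G v o → v = l) (ho_sink : ∀ u, ¬G o u) (hlO : l ∉ O) (ha : a ∈ O) (hb : b ∈ O)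
    (hab : a ≠ b) (hp : ActiveTrail (removeEdgesInto G l) Z a b p) : l ∉ p := by
  obtain ⟨htrail, hhead, hlast, -, -⟩ := hp
  have hcomponent : ∀ x y, removeEdgesInto G l x y → (x = l ∨ x = o ↔ y = l ∨ y = o) := by
    rintro x y ⟨hxy, hyl⟩
    constructor
    · rintro (rfl | rfl)
      exacts [.inr (hl y hxy), absurd hxy (ho_sink y)]
    · rintro (rfl | rfl)
      exacts [absurd rfl hyl, .inl (ho x hxy)]
  have hmem_iff {x y : V} (hx : x ∈ p) (hy : y ∈ p) : (x = l ∨ x = o ↔ y = l ∨ y = o) :=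
    List.IsChain.pred_iff_of_mem htrail
      (fun x y hxy => hxy.elim (hcomponent x y) fun hyx => (hcomponent y x hyx).symm) hx hy
  intro hlp
  have hao := ((hmem_iff hlp (List.mem_of_mem_head? hhead)).1 (.inl rfl)).resolve_left
    (fun h => hlO (h ▸ ha))
  have hbo := ((hmem_iff hlp (List.mem_of_mem_getLast? hlast)).1 (.inl rfl)).resolve_left
    (fun h => hlO (h ▸ hb))
  exact hab (hao.trans hbo.symm)

theorem obsEquiv_removeEdgesInto_removeEdge {O : Set V} (hl : ∀ u, G l u → u = o)
    (ho : ∀ v, G v o → v = l) (ho_sink : ∀ u, ¬G o u) (hlO : l ∉ O) :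
    ObsEquiv (removeEdgesInto G l) (removeEdge G l o) O := by
  intro A B Z hA hB hZ hAB _ _
  have hlZ : l ∉ Z := fun h => hlO (hZ h)
  refine forall₂_congr fun a ha => forall₂_congr fun b hb => not_congr <| exists_congr fun p => ?_
  have hal : a ≠ l := fun h => hlO (h ▸ hA ha)
  have hbl : b ≠ l := fun h => hlO (h ▸ hB hb)
  have hab : a ≠ b := fun h => Set.disjoint_left.1 hAB ha (h ▸ hb)
  exact ⟨fun hp => (activeTrail_removeEdgesInto_iff_removeEdge hl hlZ
      (not_mem_of_activeTrail_removeEdgesInto hl ho ho_sink hlO (hA ha) (hB hb) hab hp)).1 hp,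
    fun hp => (activeTrail_removeEdgesInto_iff_removeEdge hl hlZ
      (not_mem_of_activeTrail_removeEdge hl hlZ hal hbl hp)).2 hp⟩

end Mutilation

theorem sink_mech_meas_obsEquiv_general {d : ℕ}
    (G : (Fin d ⊕ Fin d) → (Fin d ⊕ Fin d) → Prop)
    (hobs_parent : ∀ (j : Fin d) (v : Fin d ⊕ Fin d), G v (Sum.inr j) ↔ v = Sum.inl j)
    (hobs_nochild : ∀ (j : Fin d) (v : Fin d ⊕ Fin d), ¬ G (Sum.inr j) v)
    (s : Fin d)
    (hsink : ∀ j : Fin d, ¬ G (Sum.inl s) (Sum.inl j)) :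
    ObsEquiv
      (fun v u => G v u ∧ u ≠ Sum.inl s)
      (fun v u => G v u ∧ ¬ (v = Sum.inl s ∧ u = Sum.inr s))
      (Set.range (Sum.inr : Fin d → Fin d ⊕ Fin d)) := by
  have hchild : ∀ u, G (Sum.inl s) u → u = Sum.inr s := by
    rintro (j | j) hu
    exacts [absurd hu (hsink j), by rw [Sum.inl_injective ((hobs_parent j _).1 hu)]]
  exact obsEquiv_removeEdgesInto_removeEdge hchild (fun v => (hobs_parent s v).1)
    (hobs_nochild s) (by simp)

/-- let `G` be a DAG over latent nodes `X*₁, …, X*_d` (encoded `Sum.inl j`)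
and observed nodes `X₁, …, X_d` (encoded `Sum.inr j`), where each observed node `X_j` has
exactly one parent `X*_j` and no children.  If `X*_s` is a sink of the induced latent
subgraph, then the mutilation removing all edges into `X*_s` (mechanistic intervention)
and the mutilation removing the edge `X*_s → X_s` (measurement intervention) imply the
same d-separation constraints over the observed variables. -/
theorem sink_mech_meas_obsEquiv {d : ℕ}
    (G : (Fin d ⊕ Fin d) → (Fin d ⊕ Fin d) → Prop)
    (hacyclic : ∀ v, ¬ Relation.TransGen G v v)
    (hobs_parent : ∀ (j : Fin d) (v : Fin d ⊕ Fin d), G v (Sum.inr j) ↔ v = Sum.inl j)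
    (hobs_nochild : ∀ (j : Fin d) (v : Fin d ⊕ Fin d), ¬ G (Sum.inr j) v)
    (s : Fin d)
    (hsink : ∀ j : Fin d, ¬ G (Sum.inl s) (Sum.inl j)) :
    ObsEquiv
      (fun v u => G v u ∧ u ≠ Sum.inl s)
      (fun v u => G v u ∧ ¬ (v = Sum.inl s ∧ u = Sum.inr s))
      (Set.range (Sum.inr : Fin d → Fin d ⊕ Fin d)) :=
  sink_mech_meas_obsEquiv_general G hobs_parent hobs_nochild s hsink
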